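/- Let H be a Hopf algebra with invertible antipode, K a bialgebra, A an (H,K)-bicomodule algebra and C a (K,H)-bimodule coalgebra. For a k-module M that is a left A-module and right C-comodule, the compatibility condition (a_{[0]}m)_{[0]} ⊗ (a_{[0]}m)_{[1]} ◁ a_{[-1]} = a_{[0]}m_{[0]} ⊗ a_{[1]} ▷ m_{[1]} holds for all a ∈ A, m ∈ M if and only if (am)_{[0]} ⊗ (am)_{[1]} = a_{[0]}m_{[0]} ⊗ a_{[1]} ▷ m_{[1]} ◁ S⁻¹(a_{[-1]}) holds for all a ∈ A, m ∈ M. -/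

import Mathlib

open TensorProduct Coalgebra LinearMap

variable {k : Type} [CommRing k]

section Conv

variable {Co B : Type} [AddCommGroup Co] [Module k Co] [Coalgebra k Co]
  [Ring B] [Algebra k B]

/-- Convolution product of linear maps from a coalgebra to an algebra. -/
noncomputable def myconv (f g : Co →ₗ[k] B) : Co →ₗ[k] B :=
  LinearMap.mul' k B ∘ₗ TensorProduct.map f g ∘ₗ comul

lemma myconv_apply (f g : Co →ₗ[k] B) {ι : Type*} {c : Co} (r : Coalgebra.Repr k c ι) :
    myconv f g c = ∑ i ∈ r.index, f (r.left i) * g (r.right i) := by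
  simp only [myconv, LinearMap.comp_apply, ← r.eq, map_sum, TensorProduct.map_tmul,
    LinearMap.mul'_apply]

lemma sum_counit_smul {ι : Type*} {c : Co} (r : Coalgebra.Repr k c ι) :
    ∑ i ∈ r.index, counit (R := k) (r.left i) • r.right i = c := by
  have h := congrArg (TensorProduct.lid k Co) (sum_counit_tmul_eq r)
  simp only [map_sum, TensorProduct.lid_tmul, one_smul] at h
  exact h

lemma sum_smul_counit {ι : Type*} {c : Co} (r : Coalgebra.Repr k c ι) :
    ∑ i ∈ r.index, counit (R := k) (r.right i) • r.left i = c := by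
  have h := congrArg (TensorProduct.rid k Co) (sum_tmul_counit_eq r)
  simp only [map_sum, TensorProduct.rid_tmul, one_smul] at h
  exact h

lemma one_myconv (f : Co →ₗ[k] B) :
    myconv (Algebra.linearMap k B ∘ₗ counit) f = f := by
  ext c
  rw [myconv_apply _ _ (ℛ k c)]
  calc ∑ i ∈ (ℛ k c).index,
        (Algebra.linearMap k B ∘ₗ counit) ((ℛ k c).left i) * f ((ℛ k c).right i)
      = ∑ i ∈ (ℛ k c).index, f (counit (R := k) ((ℛ k c).left i) • (ℛ k c).right i) := by
        refine Finset.sum_congr rfl fun i _ => ?_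
        simp [Algebra.smul_def]
    _ = f c := by rw [← map_sum, _root_.sum_counit_smul]

lemma myconv_one (f : Co →ₗ[k] B) :
    myconv f (Algebra.linearMap k B ∘ₗ counit) = f := by
  ext c
  rw [myconv_apply _ _ (ℛ k c)]
  calc ∑ i ∈ (ℛ k c).index,
        f ((ℛ k c).left i) * (Algebra.linearMap k B ∘ₗ counit) ((ℛ k c).right i)
      = ∑ i ∈ (ℛ k c).index, f (counit (R := k) ((ℛ k c).right i) • (ℛ k c).left i) := by
        refine Finset.sum_congr rfl fun i _ => ?_
        simp [Algebra.smul_def, Algebra.commutes, mul_comm]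
    _ = f c := by rw [← map_sum, sum_smul_counit]

lemma myconv_assoc (f g h : Co →ₗ[k] B) :
    myconv (myconv f g) h = myconv f (myconv g h) := by
  ext c
  set r := ℛ k c with hr
  set r1 : (i : r.ι) → Coalgebra.Repr k (r.left i) (Co × Co) := fun i => ℛ k (r.left i) with hr1
  set r2 : (i : r.ι) → Coalgebra.Repr k (r.right i) (Co × Co) := fun i => ℛ k (r.right i) with hr2
  have key := sum_map_tmul_tmul_eq (R := k) f g h c (repr := r) (a₁ := r1) (a₂ := r2)
  have key2 := congrArg (LinearMap.mul' k B ∘ₗ LinearMap.lTensor B (LinearMap.mul' k B)) key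
  simp only [map_sum, LinearMap.comp_apply, LinearMap.lTensor_tmul, LinearMap.mul'_apply] at key2
  rw [myconv_apply _ _ r, myconv_apply _ _ r]
  calc ∑ i ∈ r.index, myconv f g (r.left i) * h (r.right i)
      = ∑ i ∈ r.index, ∑ j ∈ (r1 i).index,
          f ((r1 i).left j) * (g ((r1 i).right j) * h (r.right i)) := by
        refine Finset.sum_congr rfl fun i _ => ?_
        rw [myconv_apply _ _ (r1 i), Finset.sum_mul]
        exact Finset.sum_congr rfl fun j _ => (mul_assoc _ _ _)
    _ = ∑ i ∈ r.index, ∑ j ∈ (r2 i).index,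
          f (r.left i) * (g ((r2 i).left j) * h ((r2 i).right j)) := key2.symm
    _ = ∑ i ∈ r.index, f (r.left i) * myconv g h (r.right i) := by
        refine Finset.sum_congr rfl fun i _ => ?_
        rw [myconv_apply _ _ (r2 i), Finset.mul_sum]

end Conv

variable {k : Type} [CommRing k] {H : Type} [Ring H] [HopfAlgebra k H]

-- test: comul on tensor product
example (a b : H) : comul (R := k) (a ⊗ₜ[k] b) =
    TensorProduct.tensorTensorTensorComm k H H H H
      (TensorProduct.map comul comul (a ⊗ₜ b)) := by
  rw [TensorProduct.comul_tmul]; rfl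

example (a b : H) : counit (R := k) (a ⊗ₜ[k] b) = counit (R := k) a * counit (R := k) b := by
  rw [TensorProduct.counit_tmul, smul_eq_mul, mul_comm]

lemma my_antipode_one : HopfAlgebra.antipode (R := k) (A := H) 1 = 1 := by
  have h := HopfAlgebra.mul_antipode_rTensor_comul_apply (R := k) (A := H) 1
  rw [Bialgebra.comul_one, Algebra.TensorProduct.one_def, LinearMap.rTensor_tmul,
    LinearMap.mul'_apply, mul_one, Bialgebra.counit_one] at h
  simpa using h

/-- A representation of `comul (a ⊗ₜ b)` from representations of `a`, `b`. -/
noncomputable def Repr.tmul {ι κ : Type*} {a b : H} (ra : Coalgebra.Repr k a ι)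
    (rb : Coalgebra.Repr k b κ) :
    Coalgebra.Repr k (a ⊗ₜ[k] b) (ι × κ) where
  index := ra.index ×ˢ rb.index
  left p := ra.left p.1 ⊗ₜ rb.left p.2
  right p := ra.right p.1 ⊗ₜ rb.right p.2
  eq := by
    rw [TensorProduct.comul_tmul, ← ra.eq, ← rb.eq, TensorProduct.sum_tmul]
    simp only [TensorProduct.tmul_sum, map_sum]
    rw [Finset.sum_product]
    exact Finset.sum_congr rfl fun i _ => Finset.sum_congr rfl fun j _ =>
      by rw [TensorProduct.AlgebraTensorModule.tensorTensorTensorComm_tmul]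

/-- A representation of `comul (a * b)` from representations of `a`, `b`. -/
noncomputable def Repr.mul {ι κ : Type*} {a b : H} (ra : Coalgebra.Repr k a ι)
    (rb : Coalgebra.Repr k b κ) :
    Coalgebra.Repr k (a * b) (ι × κ) where
  index := ra.index ×ˢ rb.index
  left p := ra.left p.1 * rb.left p.2
  right p := ra.right p.1 * rb.right p.2
  eq := by
    rw [Bialgebra.comul_mul, ← ra.eq, ← rb.eq, Finset.sum_mul_sum]
    rw [Finset.sum_product]
    exact Finset.sum_congr rfl fun i _ => Finset.sum_congr rfl fun j _ =>
      (Algebra.TensorProduct.tmul_mul_tmul _ _ _ _).symm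

lemma my_antipode_mul (a b : H) :
    HopfAlgebra.antipode (R := k) (A := H) (a * b) =
      HopfAlgebra.antipode (R := k) (A := H) b * HopfAlgebra.antipode (R := k) (A := H) a := by
  set S : H →ₗ[k] H := HopfAlgebra.antipode (R := k) (A := H) with hS
  set μm : H ⊗[k] H →ₗ[k] H := LinearMap.mul' k H with hμm
  set F : H ⊗[k] H →ₗ[k] H := S ∘ₗ μm with hF
  set G : H ⊗[k] H →ₗ[k] H :=
    μm ∘ₗ TensorProduct.map S S ∘ₗ (TensorProduct.comm k H H).toLinearMap with hG
  have h1 : myconv F μm = Algebra.linearMap k H ∘ₗ counit := by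
    apply TensorProduct.ext'
    intro x y
    have rx := ℛ k x; have ry := ℛ k y
    rw [myconv_apply _ _ (Repr.tmul rx ry)]
    calc ∑ p ∈ (Repr.tmul rx ry).index,
          F ((Repr.tmul rx ry).left p) * μm ((Repr.tmul rx ry).right p)
        = ∑ p ∈ (Repr.mul rx ry).index,
            S ((Repr.mul rx ry).left p) * (Repr.mul rx ry).right p := by
          refine Finset.sum_congr rfl fun p _ => ?_
          simp [hF, hμm, Repr.tmul, Repr.mul]
      _ = algebraMap k H (counit (R := k) (x * y)) :=
          HopfAlgebra.sum_antipode_mul_eq_algebraMap_counit (R := k) (Repr.mul rx ry)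
      _ = (Algebra.linearMap k H ∘ₗ counit) (x ⊗ₜ[k] y) := by
          rw [LinearMap.comp_apply, TensorProduct.counit_tmul,
            Bialgebra.counit_mul]
          simp [mul_comm]
  have h2 : myconv μm G = Algebra.linearMap k H ∘ₗ counit := by
    apply TensorProduct.ext'
    intro x y
    have rx := ℛ k x; have ry := ℛ k y
    rw [myconv_apply _ _ (Repr.tmul rx ry)]
    calc ∑ p ∈ (Repr.tmul rx ry).index,
          μm ((Repr.tmul rx ry).left p) * G ((Repr.tmul rx ry).right p)
        = ∑ p ∈ rx.index ×ˢ ry.index,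
            rx.left p.1 * (ry.left p.2 * S (ry.right p.2) * S (rx.right p.1)) := by
          refine Finset.sum_congr rfl fun p _ => ?_
          simp only [hμm, hG, Repr.tmul, LinearMap.mul'_apply, LinearMap.comp_apply,
            LinearEquiv.coe_coe, TensorProduct.comm_tmul, TensorProduct.map_tmul]
          simp only [mul_assoc]
      _ = ∑ i ∈ rx.index, ∑ j ∈ ry.index,
            rx.left i * (ry.left j * S (ry.right j) * S (rx.right i)) := by
          rw [Finset.sum_product]
      _ = ∑ i ∈ rx.index, rx.left i *
            (algebraMap k H (counit (R := k) y) * S (rx.right i)) := by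
          refine Finset.sum_congr rfl fun i _ => ?_
          rw [← HopfAlgebra.sum_mul_antipode_eq_algebraMap_counit (R := k) ry, Finset.sum_mul, Finset.mul_sum]
      _ = counit (R := k) y • ∑ i ∈ rx.index, rx.left i * S (rx.right i) := by
          rw [Finset.smul_sum]
          refine Finset.sum_congr rfl fun i _ => ?_
          rw [Algebra.smul_def, ← mul_assoc, ← Algebra.commutes, mul_assoc]
      _ = (Algebra.linearMap k H ∘ₗ counit) (x ⊗ₜ[k] y) := by
          rw [HopfAlgebra.sum_mul_antipode_eq_algebraMap_counit (R := k) rx,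
            LinearMap.comp_apply, TensorProduct.counit_tmul,
            Algebra.smul_def]
          simp only [LinearMap.comp_apply, TensorProduct.map_tmul, LinearMap.mul'_apply,
            map_mul, Algebra.linearMap_apply]
          rw [smul_eq_mul, map_mul]
  have hFG : F = G := by
    calc F = myconv F (Algebra.linearMap k H ∘ₗ counit) := (myconv_one F).symm
      _ = myconv F (myconv μm G) := by rw [h2]
      _ = myconv (myconv F μm) G := (myconv_assoc F μm G).symm
      _ = myconv (Algebra.linearMap k H ∘ₗ counit) G := by rw [h1]
      _ = G := one_myconv G
  have h := LinearMap.congr_fun hFG (a ⊗ₜ[k] b)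
  simp only [hF, hG, hμm, LinearMap.comp_apply, LinearMap.mul'_apply,
    LinearEquiv.coe_coe, TensorProduct.comm_tmul, TensorProduct.map_tmul] at h
  exact h

section Sinv
variable (Sinv : H →ₗ[k] H)
    (hS1 : Sinv ∘ₗ HopfAlgebra.antipode (R := k) (A := H) = LinearMap.id)
    (hS2 : HopfAlgebra.antipode (R := k) (A := H) ∘ₗ Sinv = LinearMap.id)

include hS1 hS2

lemma my_antipode_injective : Function.Injective (HopfAlgebra.antipode (R := k) (A := H)) := by
  intro x y hxy
  have hx := LinearMap.congr_fun hS1 x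
  have hy := LinearMap.congr_fun hS1 y
  simp only [LinearMap.comp_apply, LinearMap.id_apply] at hx hy
  rw [← hx, ← hy, hxy]

lemma my_antipode_algebraMap (c : k) :
    HopfAlgebra.antipode (R := k) (A := H) (algebraMap k H c) = algebraMap k H c := by
  rw [Algebra.algebraMap_eq_smul_one, map_smul, my_antipode_one]

lemma sum_mul_sinv_eq {ι : Type*} {h : H} (r : Coalgebra.Repr k h ι) :
    ∑ i ∈ r.index, r.right i * Sinv (r.left i) = algebraMap k H (counit (R := k) h) := by
  apply my_antipode_injective Sinv hS1 hS2
  rw [map_sum, my_antipode_algebraMap Sinv hS1 hS2]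
  calc ∑ i ∈ r.index, HopfAlgebra.antipode (R := k) (A := H) (r.right i * Sinv (r.left i))
      = ∑ i ∈ r.index, r.left i * HopfAlgebra.antipode (R := k) (A := H) (r.right i) := by
        refine Finset.sum_congr rfl fun i _ => ?_
        rw [my_antipode_mul]
        congr 1
        exact LinearMap.congr_fun hS2 (r.left i)
    _ = algebraMap k H (counit (R := k) h) := HopfAlgebra.sum_mul_antipode_eq_algebraMap_counit (R := k) r

lemma sum_sinv_mul_eq {ι : Type*} {h : H} (r : Coalgebra.Repr k h ι) :
    ∑ i ∈ r.index, Sinv (r.right i) * r.left i = algebraMap k H (counit (R := k) h) := by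
  apply my_antipode_injective Sinv hS1 hS2
  rw [map_sum, my_antipode_algebraMap Sinv hS1 hS2]
  calc ∑ i ∈ r.index, HopfAlgebra.antipode (R := k) (A := H) (Sinv (r.right i) * r.left i)
      = ∑ i ∈ r.index, HopfAlgebra.antipode (R := k) (A := H) (r.left i) * r.right i := by
        refine Finset.sum_congr rfl fun i _ => ?_
        rw [my_antipode_mul]
        congr 1
        exact LinearMap.congr_fun hS2 (r.right i)
    _ = algebraMap k H (counit (R := k) h) := HopfAlgebra.sum_antipode_mul_eq_algebraMap_counit (R := k) r

end Sinv

section Taux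

variable {A M C : Type} [AddCommGroup A] [Module k A]
  [AddCommGroup M] [Module k M] [AddCommGroup C] [Module k C]

/-- Act on the `C`-factor: `(x ⊗ c) ⊗ h ↦ x ⊗ actR (c ⊗ h)`. -/
noncomputable def eAux (actR : C ⊗[k] H →ₗ[k] C) : (M ⊗[k] C) ⊗[k] H →ₗ[k] M ⊗[k] C :=
  LinearMap.lTensor M actR ∘ₗ (TensorProduct.assoc k M C H).toLinearMap

lemma eAux_tmul (actR : C ⊗[k] H →ₗ[k] C) (x : M) (c : C) (h : H) :
    eAux actR ((x ⊗ₜ c) ⊗ₜ h) = x ⊗ₜ actR (c ⊗ₜ h) := by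
  simp [eAux]

lemma eAux_one (actR : C ⊗[k] H →ₗ[k] C) (hactRone : ∀ c : C, actR (c ⊗ₜ 1) = c)
    (y : M ⊗[k] C) : eAux (M := M) actR (y ⊗ₜ (1 : H)) = y := by
  induction y using TensorProduct.induction_on with
  | zero => simp
  | tmul x c => rw [eAux_tmul, hactRone]
  | add u v hu hv => rw [TensorProduct.add_tmul, map_add, hu, hv]

lemma eAux_mul (actR : C ⊗[k] H →ₗ[k] C)
    (hactRmul : ∀ (c : C) (g h : H), actR (c ⊗ₜ (g * h)) = actR (actR (c ⊗ₜ g) ⊗ₜ h))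
    (y : M ⊗[k] C) (g h : H) :
    eAux (M := M) actR (eAux (M := M) actR (y ⊗ₜ g) ⊗ₜ h) = eAux actR (y ⊗ₜ (g * h)) := by
  induction y using TensorProduct.induction_on with
  | zero => simp
  | tmul x c => rw [eAux_tmul, eAux_tmul, eAux_tmul, hactRmul]
  | add u v hu hv =>
      rw [TensorProduct.add_tmul, map_add, TensorProduct.add_tmul, map_add, hu, hv,
        TensorProduct.add_tmul, map_add]

/-- The twisting operator `f ↦ (a ⊗ m ↦ ∑ f(a₍₀₎ ⊗ m) ◁ φ(a₍₋₁₎))`. -/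
noncomputable def Taux (ΔL : A →ₗ[k] H ⊗[k] A) (actR : C ⊗[k] H →ₗ[k] C)
    (φ : H →ₗ[k] H) (f : A ⊗[k] M →ₗ[k] M ⊗[k] C) : A ⊗[k] M →ₗ[k] M ⊗[k] C :=
  eAux actR ∘ₗ LinearMap.rTensor H f ∘ₗ LinearMap.lTensor (A ⊗[k] M) φ ∘ₗ
    (TensorProduct.comm k H (A ⊗[k] M)).toLinearMap ∘ₗ
    (TensorProduct.assoc k H A M).toLinearMap ∘ₗ LinearMap.rTensor M ΔL

lemma Taux_tmul (ΔL : A →ₗ[k] H ⊗[k] A) (actR : C ⊗[k] H →ₗ[k] C)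
    (φ : H →ₗ[k] H) (f : A ⊗[k] M →ₗ[k] M ⊗[k] C) (a : A) (m : M)
    {s : Finset (H × A)} (hs : ΔL a = ∑ p ∈ s, p.1 ⊗ₜ p.2) :
    Taux ΔL actR φ f (a ⊗ₜ m) = ∑ p ∈ s, eAux actR (f (p.2 ⊗ₜ m) ⊗ₜ φ p.1) := by
  simp only [Taux, LinearMap.comp_apply, LinearMap.rTensor_tmul, hs,
    TensorProduct.sum_tmul, map_sum, LinearEquiv.coe_coe, TensorProduct.assoc_tmul,
    TensorProduct.comm_tmul, LinearMap.lTensor_tmul]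

lemma Taux_counit (ΔL : A →ₗ[k] H ⊗[k] A) (actR : C ⊗[k] H →ₗ[k] C)
    (hLcounit : (TensorProduct.lid k A).toLinearMap ∘ₗ
        (LinearMap.rTensor A (counit (R := k) (A := H))) ∘ₗ ΔL = LinearMap.id)
    (hactRone : ∀ c : C, actR (c ⊗ₜ 1) = c)
    (f : A ⊗[k] M →ₗ[k] M ⊗[k] C) :
    Taux ΔL actR (Algebra.linearMap k H ∘ₗ counit) f = f := by
  apply TensorProduct.ext'
  intro a m
  obtain ⟨s, hs⟩ := TensorProduct.exists_finset (R := k) (ΔL a)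
  rw [Taux_tmul _ _ _ _ _ _ hs]
  have key : ∑ p ∈ s, counit (R := k) p.1 • p.2 = a := by
    have h := LinearMap.congr_fun hLcounit a
    simp only [LinearMap.comp_apply, LinearEquiv.coe_coe, LinearMap.id_apply, hs,
      map_sum, LinearMap.rTensor_tmul, TensorProduct.lid_tmul] at h
    exact h
  calc ∑ p ∈ s, eAux actR (f (p.2 ⊗ₜ m) ⊗ₜ (Algebra.linearMap k H ∘ₗ counit) p.1)
      = ∑ p ∈ s, f ((counit (R := k) p.1 • p.2) ⊗ₜ m) := by
        refine Finset.sum_congr rfl fun p _ => ?_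
        rw [LinearMap.comp_apply, Algebra.linearMap_apply, Algebra.algebraMap_eq_smul_one,
          TensorProduct.tmul_smul, map_smul, eAux_one actR hactRone,
          ← TensorProduct.smul_tmul', map_smul]
    _ = f (a ⊗ₜ m) := by
        rw [← key, TensorProduct.sum_tmul, map_sum]

end Taux

section TauxComp

variable {A M C : Type} [AddCommGroup A] [Module k A]
  [AddCommGroup M] [Module k M] [AddCommGroup C] [Module k C]

lemma Taux_comp (ΔL : A →ₗ[k] H ⊗[k] A) (actR : C ⊗[k] H →ₗ[k] C)
    (hLcoassoc : (TensorProduct.assoc k H H A).toLinearMap ∘ₗ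
        (LinearMap.rTensor A (comul (R := k) (A := H))) ∘ₗ ΔL = (LinearMap.lTensor H ΔL) ∘ₗ ΔL)
    (hactRmul : ∀ (c : C) (g h : H), actR (c ⊗ₜ (g * h)) = actR (actR (c ⊗ₜ g) ⊗ₜ h))
    (φ ψ : H →ₗ[k] H) (f : A ⊗[k] M →ₗ[k] M ⊗[k] C) :
    Taux ΔL actR φ (Taux ΔL actR ψ f) =
      Taux ΔL actR (LinearMap.mul' k H ∘ₗ TensorProduct.map ψ φ ∘ₗ
        (TensorProduct.comm k H H).toLinearMap ∘ₗ comul) f := by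
  apply TensorProduct.ext'
  intro a m
  obtain ⟨s, hs⟩ := TensorProduct.exists_finset (R := k) (ΔL a)
  choose t ht using fun b : A => TensorProduct.exists_finset (R := k) (ΔL b)
  set Θ : H ⊗[k] (H ⊗[k] A) →ₗ[k] M ⊗[k] C :=
    eAux actR ∘ₗ LinearMap.rTensor H (f ∘ₗ (TensorProduct.mk k A M).flip m) ∘ₗ
      LinearMap.lTensor A (LinearMap.mul' k H ∘ₗ TensorProduct.map ψ φ ∘ₗ
        (TensorProduct.comm k H H).toLinearMap) ∘ₗ
      (TensorProduct.comm k (H ⊗[k] H) A).toLinearMap ∘ₗ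
      (TensorProduct.assoc k H H A).symm.toLinearMap with hΘ
  have hΘ_tmul : ∀ (h g : H) (b : A),
      Θ (h ⊗ₜ (g ⊗ₜ b)) = eAux actR (f (b ⊗ₜ m) ⊗ₜ (ψ g * φ h)) := by
    intro h g b
    simp only [hΘ, LinearMap.comp_apply, LinearEquiv.coe_coe,
      TensorProduct.assoc_symm_tmul, TensorProduct.comm_tmul, LinearMap.lTensor_tmul,
      TensorProduct.map_tmul, LinearMap.mul'_apply, LinearMap.rTensor_tmul,
      TensorProduct.mk_apply, LinearMap.flip_apply]
  have lhs_eq : Taux ΔL actR φ (Taux ΔL actR ψ f) (a ⊗ₜ m) =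
      Θ (LinearMap.lTensor H ΔL (ΔL a)) := by
    rw [Taux_tmul _ _ _ _ _ _ hs, hs]
    simp only [map_sum]
    refine Finset.sum_congr rfl fun p _ => ?_
    rw [Taux_tmul _ _ _ _ _ _ (ht p.2), LinearMap.lTensor_tmul, ht p.2,
      TensorProduct.tmul_sum, map_sum, TensorProduct.sum_tmul, map_sum]
    refine Finset.sum_congr rfl fun q _ => ?_
    rw [hΘ_tmul, eAux_mul actR hactRmul]
  have rhs_eq : Taux ΔL actR (LinearMap.mul' k H ∘ₗ TensorProduct.map ψ φ ∘ₗ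
        (TensorProduct.comm k H H).toLinearMap ∘ₗ comul) f (a ⊗ₜ m) =
      Θ ((TensorProduct.assoc k H H A) (LinearMap.rTensor A (comul (R := k)) (ΔL a))) := by
    rw [Taux_tmul _ _ _ _ _ _ hs, hs]
    simp only [map_sum]
    refine Finset.sum_congr rfl fun p _ => ?_
    rw [LinearMap.rTensor_tmul]
    conv_rhs => rw [← (ℛ k p.1).eq]
    rw [TensorProduct.sum_tmul, map_sum, map_sum]
    conv_lhs => rw [LinearMap.comp_apply, LinearMap.comp_apply, LinearMap.comp_apply,
      ← (ℛ k p.1).eq, map_sum, map_sum, map_sum, TensorProduct.tmul_sum, map_sum]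
    refine Finset.sum_congr rfl fun j _ => ?_
    simp only [LinearEquiv.coe_coe, TensorProduct.assoc_tmul, TensorProduct.comm_tmul,
      TensorProduct.map_tmul, LinearMap.mul'_apply, hΘ_tmul]
  have hco := LinearMap.congr_fun hLcoassoc a
  simp only [LinearMap.comp_apply, LinearEquiv.coe_coe] at hco
  rw [lhs_eq, rhs_eq, hco]

end TauxComp

section Ccnv
variable (Sinv : H →ₗ[k] H)
    (hS1 : Sinv ∘ₗ HopfAlgebra.antipode (R := k) (A := H) = LinearMap.id)
    (hS2 : HopfAlgebra.antipode (R := k) (A := H) ∘ₗ Sinv = LinearMap.id)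

include hS1 hS2

lemma ccnv_id_sinv :
    LinearMap.mul' k H ∘ₗ TensorProduct.map LinearMap.id Sinv ∘ₗ
      (TensorProduct.comm k H H).toLinearMap ∘ₗ comul =
    Algebra.linearMap k H ∘ₗ counit := by
  ext h
  rw [LinearMap.comp_apply, LinearMap.comp_apply, LinearMap.comp_apply, ← (ℛ k h).eq]
  simp only [map_sum, LinearEquiv.coe_coe, TensorProduct.comm_tmul, TensorProduct.map_tmul,
    LinearMap.mul'_apply, LinearMap.id_apply]
  rw [sum_mul_sinv_eq Sinv hS1 hS2 (ℛ k h)]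
  simp

lemma ccnv_sinv_id :
    LinearMap.mul' k H ∘ₗ TensorProduct.map Sinv LinearMap.id ∘ₗ
      (TensorProduct.comm k H H).toLinearMap ∘ₗ comul =
    Algebra.linearMap k H ∘ₗ counit := by
  ext h
  rw [LinearMap.comp_apply, LinearMap.comp_apply, LinearMap.comp_apply, ← (ℛ k h).eq]
  simp only [map_sum, LinearEquiv.coe_coe, TensorProduct.comm_tmul, TensorProduct.map_tmul,
    LinearMap.mul'_apply, LinearMap.id_apply]
  rw [sum_sinv_mul_eq Sinv hS1 hS2 (ℛ k h)]
  simp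

end Ccnv

set_option maxHeartbeats 1600000
set_option synthInstance.maxHeartbeats 1000000

/-- Let `H` be a Hopf algebra with invertible antipode (inverse `Sinv`), `K` a
bialgebra, `A` an `(H,K)`-bicomodule algebra with left coaction `ΔL` and right
coaction `ΔR`, `C` a `(K,H)`-bimodule coalgebra with actions `actL`, `actR`, and
`M` a left `A`-module (action `μ`) and right `C`-comodule (coaction `ρ`).
Then the generalized Yetter-Drinfeld compatibility condition
`(a₍₀₎m)₍₀₎ ⊗ (a₍₀₎m)₍₁₎ ◁ a₍₋₁₎ = a₍₀₎m₍₀₎ ⊗ a₍₁₎ ▷ m₍₁₎`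
holds iff
`(am)₍₀₎ ⊗ (am)₍₁₎ = a₍₀₎m₍₀₎ ⊗ a₍₁₎ ▷ (m₍₁₎ ◁ S⁻¹(a₍₋₁₎))`
holds, both expressed as equalities of linear maps `A ⊗ M → M ⊗ C`. -/
theorem genYD_compatibility_iff
    {k : Type} [CommRing k]
    {H : Type} [Ring H] [HopfAlgebra k H]
    {K : Type} [Ring K] [Bialgebra k K]
    {A : Type} [Ring A] [Algebra k A]
    {C : Type} [AddCommGroup C] [Module k C] [Coalgebra k C]
    {M : Type} [AddCommGroup M] [Module k M]
    (ΔL : A →ₗ[k] H ⊗[k] A) (ΔR : A →ₗ[k] A ⊗[k] K)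
    (actL : K ⊗[k] C →ₗ[k] C) (actR : C ⊗[k] H →ₗ[k] C)
    (μ : A ⊗[k] M →ₗ[k] M) (ρ : M →ₗ[k] M ⊗[k] C)
    (Sinv : H →ₗ[k] H)
    -- `Sinv` is a two-sided inverse of the antipode of `H`
    (hS1 : Sinv ∘ₗ HopfAlgebra.antipode (R := k) (A := H) = LinearMap.id)
    (hS2 : HopfAlgebra.antipode (R := k) (A := H) ∘ₗ Sinv = LinearMap.id)
    -- `A` is an `(H,K)`-bicomodule (algebra): coassociativity, counitality, mixed coassociativity
    (hLcoassoc : (TensorProduct.assoc k H H A).toLinearMap ∘ₗ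
        (LinearMap.rTensor A (comul (R := k) (A := H))) ∘ₗ ΔL = (LinearMap.lTensor H ΔL) ∘ₗ ΔL)
    (hLcounit : (TensorProduct.lid k A).toLinearMap ∘ₗ
        (LinearMap.rTensor A (counit (R := k) (A := H))) ∘ₗ ΔL = LinearMap.id)
    (hRcoassoc : (TensorProduct.assoc k A K K).toLinearMap ∘ₗ
        (LinearMap.rTensor K ΔR) ∘ₗ ΔR = (LinearMap.lTensor A (comul (R := k) (A := K))) ∘ₗ ΔR)
    (hRcounit : (TensorProduct.rid k A).toLinearMap ∘ₗ
        (LinearMap.lTensor A (counit (R := k) (A := K))) ∘ₗ ΔR = LinearMap.id)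
    (hmixed : (TensorProduct.assoc k H A K).toLinearMap ∘ₗ
        (LinearMap.rTensor K ΔL) ∘ₗ ΔR = (LinearMap.lTensor H ΔR) ∘ₗ ΔL)
    (hΔLalg : ∀ a b : A, ΔL (a * b) = ΔL a * ΔL b) (hΔLone : ΔL 1 = 1)
    (hΔRalg : ∀ a b : A, ΔR (a * b) = ΔR a * ΔR b) (hΔRone : ΔR 1 = 1)
    -- `C` is a `(K,H)`-bimodule: unital associative commuting actions
    (hactLone : ∀ c : C, actL (1 ⊗ₜ c) = c)
    (hactLmul : ∀ (x y : K) (c : C), actL ((x * y) ⊗ₜ c) = actL (x ⊗ₜ actL (y ⊗ₜ c)))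
    (hactRone : ∀ c : C, actR (c ⊗ₜ 1) = c)
    (hactRmul : ∀ (c : C) (g h : H), actR (c ⊗ₜ (g * h)) = actR (actR (c ⊗ₜ g) ⊗ₜ h))
    (hbimod : ∀ (x : K) (c : C) (h : H), actL (x ⊗ₜ actR (c ⊗ₜ h)) = actR (actL (x ⊗ₜ c) ⊗ₜ h))
    -- `M` is a left `A`-module and right `C`-comodule
    (hμone : ∀ m : M, μ (1 ⊗ₜ m) = m)
    (hμmul : ∀ (a b : A) (m : M), μ ((a * b) ⊗ₜ m) = μ (a ⊗ₜ μ (b ⊗ₜ m)))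
    (hρcoassoc : (TensorProduct.assoc k M C C).toLinearMap ∘ₗ
        (LinearMap.rTensor C ρ) ∘ₗ ρ = (LinearMap.lTensor M (comul (R := k) (A := C))) ∘ₗ ρ)
    (hρcounit : (TensorProduct.rid k M).toLinearMap ∘ₗ
        (LinearMap.lTensor M (counit (R := k) (A := C))) ∘ₗ ρ = LinearMap.id) :
    -- condition (1)
    ((LinearMap.lTensor M actR) ∘ₗ (TensorProduct.assoc k M C H).toLinearMap ∘ₗ
        (TensorProduct.comm k H (M ⊗[k] C)).toLinearMap ∘ₗ
        (LinearMap.lTensor H (ρ ∘ₗ μ)) ∘ₗ (TensorProduct.assoc k H A M).toLinearMap ∘ₗ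
        (LinearMap.rTensor M ΔL)
      = (TensorProduct.map μ actL) ∘ₗ (TensorProduct.tensorTensorTensorComm k A K M C).toLinearMap
          ∘ₗ (LinearMap.lTensor (A ⊗[k] K) ρ) ∘ₗ (LinearMap.rTensor M ΔR))
    ↔
    -- condition (2)
    (ρ ∘ₗ μ
      = (TensorProduct.map μ actL) ∘ₗ (TensorProduct.assoc k (A ⊗[k] M) K C).toLinearMap ∘ₗ
        (TensorProduct.map
          ((TensorProduct.assoc k A M K).symm.toLinearMap ∘ₗ
            (LinearMap.lTensor A (TensorProduct.comm k K M).toLinearMap) ∘ₗ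
            (TensorProduct.assoc k A K M).toLinearMap)
          (actR ∘ₗ (TensorProduct.comm k H C).toLinearMap ∘ₗ (LinearMap.rTensor C Sinv))) ∘ₗ
        (TensorProduct.tensorTensorTensorComm k (A ⊗[k] K) H M C).toLinearMap ∘ₗ
        (LinearMap.rTensor (M ⊗[k] C) (TensorProduct.comm k H (A ⊗[k] K)).toLinearMap) ∘ₗ
        (TensorProduct.map ((LinearMap.lTensor H ΔR) ∘ₗ ΔL) ρ)) := by
  set Rmap : A ⊗[k] M →ₗ[k] M ⊗[k] C :=
    (TensorProduct.map μ actL) ∘ₗ (TensorProduct.tensorTensorTensorComm k A K M C).toLinearMap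
      ∘ₗ (LinearMap.lTensor (A ⊗[k] K) ρ) ∘ₗ (LinearMap.rTensor M ΔR) with hRmap
  have hK4 : (LinearMap.lTensor M actR) ∘ₗ (TensorProduct.assoc k M C H).toLinearMap ∘ₗ
        (TensorProduct.comm k H (M ⊗[k] C)).toLinearMap ∘ₗ
        (LinearMap.lTensor H (ρ ∘ₗ μ)) ∘ₗ (TensorProduct.assoc k H A M).toLinearMap ∘ₗ
        (LinearMap.rTensor M ΔL) = Taux ΔL actR LinearMap.id (ρ ∘ₗ μ) := by
    apply TensorProduct.ext'
    intro a m
    obtain ⟨s, hs⟩ := TensorProduct.exists_finset (R := k) (ΔL a)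
    rw [Taux_tmul _ _ _ _ _ _ hs]
    simp only [LinearMap.comp_apply, LinearMap.rTensor_tmul, hs, TensorProduct.sum_tmul,
      map_sum, LinearEquiv.coe_coe, TensorProduct.assoc_tmul, LinearMap.lTensor_tmul,
      TensorProduct.comm_tmul, LinearMap.id_apply, eAux]
  have hK6 : (TensorProduct.map μ actL) ∘ₗ (TensorProduct.assoc k (A ⊗[k] M) K C).toLinearMap ∘ₗ
        (TensorProduct.map
          ((TensorProduct.assoc k A M K).symm.toLinearMap ∘ₗ
            (LinearMap.lTensor A (TensorProduct.comm k K M).toLinearMap) ∘ₗ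
            (TensorProduct.assoc k A K M).toLinearMap)
          (actR ∘ₗ (TensorProduct.comm k H C).toLinearMap ∘ₗ (LinearMap.rTensor C Sinv))) ∘ₗ
        (TensorProduct.tensorTensorTensorComm k (A ⊗[k] K) H M C).toLinearMap ∘ₗ
        (LinearMap.rTensor (M ⊗[k] C) (TensorProduct.comm k H (A ⊗[k] K)).toLinearMap) ∘ₗ
        (TensorProduct.map ((LinearMap.lTensor H ΔR) ∘ₗ ΔL) ρ) = Taux ΔL actR Sinv Rmap := by
    apply TensorProduct.ext'
    intro a m
    obtain ⟨s, hs⟩ := TensorProduct.exists_finset (R := k) (ΔL a)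
    obtain ⟨v, hv⟩ := TensorProduct.exists_finset (R := k) (ρ m)
    choose u hu using fun b : A => TensorProduct.exists_finset (R := k) (ΔR b)
    have hR : ∀ b : A, Rmap (b ⊗ₜ m) = ∑ w ∈ u b, ∑ x ∈ v,
        μ (w.1 ⊗ₜ x.1) ⊗ₜ actL (w.2 ⊗ₜ x.2) := by
      intro b
      rw [hRmap]
      simp only [LinearMap.comp_apply, LinearMap.rTensor_tmul, LinearMap.lTensor_tmul,
        hu b, hv, TensorProduct.sum_tmul, TensorProduct.tmul_sum, map_sum,
        LinearEquiv.coe_coe, TensorProduct.tensorTensorTensorComm_tmul,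
        TensorProduct.map_tmul]
    rw [Taux_tmul _ _ _ _ _ _ hs]
    have lhs_eq : (TensorProduct.map μ actL) ((TensorProduct.assoc k (A ⊗[k] M) K C)
        ((TensorProduct.map
          ((TensorProduct.assoc k A M K).symm.toLinearMap ∘ₗ
            (LinearMap.lTensor A (TensorProduct.comm k K M).toLinearMap) ∘ₗ
            (TensorProduct.assoc k A K M).toLinearMap)
          (actR ∘ₗ (TensorProduct.comm k H C).toLinearMap ∘ₗ (LinearMap.rTensor C Sinv)))
        ((TensorProduct.tensorTensorTensorComm k (A ⊗[k] K) H M C)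
        ((LinearMap.rTensor (M ⊗[k] C) (TensorProduct.comm k H (A ⊗[k] K)).toLinearMap)
        ((TensorProduct.map ((LinearMap.lTensor H ΔR) ∘ₗ ΔL) ρ) (a ⊗ₜ m)))))) =
        ∑ p ∈ s, ∑ w ∈ u p.2, ∑ x ∈ v,
          μ (w.1 ⊗ₜ x.1) ⊗ₜ actL (w.2 ⊗ₜ actR (x.2 ⊗ₜ Sinv p.1)) := by
      rw [TensorProduct.map_tmul, LinearMap.comp_apply, hs]
      simp only [map_sum, LinearMap.lTensor_tmul, hu, hv, TensorProduct.sum_tmul,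
        TensorProduct.tmul_sum, map_sum, LinearMap.rTensor_tmul, LinearEquiv.coe_coe,
        TensorProduct.comm_tmul, TensorProduct.tensorTensorTensorComm_tmul,
        TensorProduct.map_tmul, LinearMap.comp_apply, TensorProduct.assoc_tmul,
        TensorProduct.assoc_symm_tmul]
      rw [Finset.sum_comm]
      exact Finset.sum_congr rfl fun p _ => Finset.sum_comm
    simp only [LinearMap.comp_apply, LinearEquiv.coe_coe] at lhs_eq ⊢
    rw [lhs_eq]
    refine Finset.sum_congr rfl fun p _ => ?_
    rw [hR p.2, TensorProduct.sum_tmul, map_sum]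
    refine Finset.sum_congr rfl fun w _ => ?_
    rw [TensorProduct.sum_tmul, map_sum]
    refine Finset.sum_congr rfl fun x _ => ?_
    rw [eAux_tmul, hbimod]
  constructor
  · intro h1
    calc ρ ∘ₗ μ
        = Taux ΔL actR (Algebra.linearMap k H ∘ₗ counit) (ρ ∘ₗ μ) :=
          (Taux_counit ΔL actR hLcounit hactRone _).symm
      _ = Taux ΔL actR (LinearMap.mul' k H ∘ₗ TensorProduct.map LinearMap.id Sinv ∘ₗ
            (TensorProduct.comm k H H).toLinearMap ∘ₗ comul) (ρ ∘ₗ μ) := by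
          rw [ccnv_id_sinv Sinv hS1 hS2]
      _ = Taux ΔL actR Sinv (Taux ΔL actR LinearMap.id (ρ ∘ₗ μ)) :=
          (Taux_comp ΔL actR hLcoassoc hactRmul Sinv LinearMap.id (ρ ∘ₗ μ)).symm
      _ = Taux ΔL actR Sinv Rmap := by rw [← hK4, h1]
      _ = _ := hK6.symm
  · intro h2
    calc (LinearMap.lTensor M actR) ∘ₗ (TensorProduct.assoc k M C H).toLinearMap ∘ₗ
          (TensorProduct.comm k H (M ⊗[k] C)).toLinearMap ∘ₗ
          (LinearMap.lTensor H (ρ ∘ₗ μ)) ∘ₗ (TensorProduct.assoc k H A M).toLinearMap ∘ₗ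
          (LinearMap.rTensor M ΔL)
        = Taux ΔL actR LinearMap.id (ρ ∘ₗ μ) := hK4
      _ = Taux ΔL actR LinearMap.id (Taux ΔL actR Sinv Rmap) := by rw [h2, hK6]
      _ = Taux ΔL actR (LinearMap.mul' k H ∘ₗ TensorProduct.map Sinv LinearMap.id ∘ₗ
            (TensorProduct.comm k H H).toLinearMap ∘ₗ comul) Rmap :=
          Taux_comp ΔL actR hLcoassoc hactRmul LinearMap.id Sinv Rmap
      _ = Taux ΔL actR (Algebra.linearMap k H ∘ₗ counit) Rmap := by
          rw [ccnv_sinv_id Sinv hS1 hS2]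
      _ = Rmap := Taux_counit ΔL actR hLcounit hactRone Rmap
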